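/- Let x = Uτ + U_⊥τ_⊥ with y = θ*^T x, let θ satisfy X_tr^T θ = Y_tr, and let θ̃ = θ_0 + α(θ − θ_0) for α ∈ [0,1]. Then |θ̃^T x − y| ≤ (1−α)·ε·‖τ‖₂ + (ε + α‖θ − θ_0‖₂)·‖τ_⊥‖₂, where ε = ‖θ_0 − θ*‖₂. -/

import Mathlib

open Matrix

/-- Euclidean (L2) norm of a vector in `ℝ^d`. -/
noncomputable def e2norm {d : ℕ} (v : Fin d → ℝ) : ℝ :=
  ‖(WithLp.equiv 2 (Fin d → ℝ)).symm v‖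

/-!
Since `Xᵀ = V Sᵀ Uᵀ` with `V` and `S` invertible, `Xᵀ θ = Xᵀ θ*` forces `Uᵀ (θ - θ*) = 0`: the
interpolated model makes an error `(1 - α)(θ₀ - θ*)` along the span of `U`, and an error
`(θ₀ - θ*) + α (θ - θ₀)` along its complement. Both are bounded by Cauchy–Schwarz, the columns of
`U` and `U_⊥` being orthonormal.
-/

lemma e2norm_eq_sqrt_dotProduct {d : ℕ} (v : Fin d → ℝ) : e2norm v = √(v ⬝ᵥ v) := by
  rw [e2norm, EuclideanSpace.norm_eq]
  simp [dotProduct, sq]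

lemma abs_dotProduct_le_e2norm_mul {d : ℕ} (v w : Fin d → ℝ) :
    |v ⬝ᵥ w| ≤ e2norm v * e2norm w := by
  simpa [e2norm, PiLp.inner_apply, dotProduct, mul_comm] using
    abs_real_inner_le_norm ((WithLp.equiv 2 (Fin d → ℝ)).symm v)
      ((WithLp.equiv 2 (Fin d → ℝ)).symm w)

lemma e2norm_mulVec_of_transpose_mul_self {d m : ℕ} {U : Matrix (Fin d) (Fin m) ℝ}
    (hU : Uᵀ * U = 1) (v : Fin m → ℝ) : e2norm (U *ᵥ v) = e2norm v := by
  rw [e2norm_eq_sqrt_dotProduct, e2norm_eq_sqrt_dotProduct, dotProduct_mulVec,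
    ← mulVec_transpose, mulVec_mulVec, hU, one_mulVec]

lemma abs_dotProduct_mulVec_le_of_transpose_mul_self {d m : ℕ} {U : Matrix (Fin d) (Fin m) ℝ}
    (hU : Uᵀ * U = 1) (v : Fin d → ℝ) (w : Fin m → ℝ) :
    |v ⬝ᵥ (U *ᵥ w)| ≤ e2norm v * e2norm w := by
  simpa only [e2norm_mulVec_of_transpose_mul_self hU] using abs_dotProduct_le_e2norm_mul v (U *ᵥ w)

lemma transpose_mulVec_eq_zero_of_eq_mul_mul_transpose {R k l m : Type*} [CommRing R]
    [Fintype k] [Fintype l] [Fintype m] [DecidableEq l]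
    {X : Matrix k m R} {U : Matrix k l R} {S : Matrix l l R} {V : Matrix m l R}
    (hX : X = U * S * Vᵀ) (hV : Vᵀ * V = 1) (hS : IsUnit S.det) {w : k → R}
    (hw : Xᵀ *ᵥ w = 0) : Uᵀ *ᵥ w = 0 := by
  have hUt : Uᵀ = (Sᵀ)⁻¹ * Vᵀ * Xᵀ := by
    rw [hX, transpose_mul, transpose_mul, transpose_transpose, Matrix.mul_assoc,
      ← Matrix.mul_assoc Vᵀ, hV, Matrix.one_mul,
      nonsing_inv_mul_cancel_left _ _ (by rwa [det_transpose])]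
  rw [hUt, ← mulVec_mulVec, hw, mulVec_zero]

lemma lineMap_dotProduct_sub_eq {d : ℕ} {θstar θ0 θ u w : Fin d → ℝ} (α : ℝ)
    (hfit : θ ⬝ᵥ u = θstar ⬝ᵥ u) :
    (θ0 + α • (θ - θ0)) ⬝ᵥ (u + w) - θstar ⬝ᵥ (u + w) =
      (1 - α) * ((θ0 - θstar) ⬝ᵥ u) + (θ0 - θstar) ⬝ᵥ w + α * ((θ - θ0) ⬝ᵥ w) := by
  simp only [add_dotProduct, dotProduct_add, sub_dotProduct, smul_dotProduct, smul_eq_mul]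
  linear_combination α * hfit

theorem projected_model_pointwise_bound {d n : ℕ}
    (X U : Matrix (Fin d) (Fin n) ℝ) (S V : Matrix (Fin n) (Fin n) ℝ)
    (Uperp : Matrix (Fin d) (Fin (d - n)) ℝ)
    (hX : X = U * S * Vᵀ) (hU : Uᵀ * U = 1) (hV : Vᵀ * V = 1)
    (hS : IsUnit S.det) (hUp : Uperpᵀ * Uperp = 1)
    (θstar θ0 θ : Fin d → ℝ)
    (hsol : Xᵀ *ᵥ θ = Xᵀ *ᵥ θstar)
    (α : ℝ) (hα : α ∈ Set.Icc (0 : ℝ) 1)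
    (τ : Fin n → ℝ) (τperp : Fin (d - n) → ℝ)
    (x : Fin d → ℝ) (hx : x = U *ᵥ τ + Uperp *ᵥ τperp)
    (y : ℝ) (hy : y = θstar ⬝ᵥ x) :
    |(θ0 + α • (θ - θ0)) ⬝ᵥ x - y| ≤
      (1 - α) * e2norm (θ0 - θstar) * e2norm τ +
        (e2norm (θ0 - θstar) + α * e2norm (θ - θ0)) * e2norm τperp := by
  obtain ⟨hα0, hα1⟩ := hα
  have hker : Uᵀ *ᵥ (θ - θstar) = 0 :=
    transpose_mulVec_eq_zero_of_eq_mul_mul_transpose hX hV hS (by rw [mulVec_sub, hsol, sub_self])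
  have hfit : θ ⬝ᵥ (U *ᵥ τ) = θstar ⬝ᵥ (U *ᵥ τ) := by
    rw [← sub_eq_zero, ← sub_dotProduct, dotProduct_mulVec, ← mulVec_transpose, hker,
      zero_dotProduct]
  have h1 := abs_dotProduct_mulVec_le_of_transpose_mul_self hU (θ0 - θstar) τ
  have h2 := abs_dotProduct_mulVec_le_of_transpose_mul_self hUp (θ0 - θstar) τperp
  have h3 := abs_dotProduct_mulVec_le_of_transpose_mul_self hUp (θ - θ0) τperp
  rw [hy, hx, lineMap_dotProduct_sub_eq α hfit]
  calc _ ≤ |(1 - α) * ((θ0 - θstar) ⬝ᵥ (U *ᵥ τ))| + |(θ0 - θstar) ⬝ᵥ (Uperp *ᵥ τperp)|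
          + |α * ((θ - θ0) ⬝ᵥ (Uperp *ᵥ τperp))| := abs_add_three _ _ _
    _ = (1 - α) * |(θ0 - θstar) ⬝ᵥ (U *ᵥ τ)| + |(θ0 - θstar) ⬝ᵥ (Uperp *ᵥ τperp)|
          + α * |(θ - θ0) ⬝ᵥ (Uperp *ᵥ τperp)| := by
      rw [abs_mul, abs_mul, abs_of_nonneg (sub_nonneg.mpr hα1), abs_of_nonneg hα0]
    _ ≤ _ := by
      linarith [mul_le_mul_of_nonneg_left h1 (sub_nonneg.mpr hα1),
        mul_le_mul_of_nonneg_left h3 hα0]
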